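/- arXiv:1003.0934 — 4 statements merged into one kernel-verified Lean document; each statement's English description precedes it below -/
import Mathlib

section
/- Let n ≥ 2 be an integer, let x_0 < x_1 < ⋯ < x_n be real numbers, and write Δx_i = x_{i+1} − x_i. Let L : ℝ × ℝ × ℝ × ℝ × ℝ → ℝ, (s,t,u,v,w) ↦ L(s,t,u,v,w), admit continuous partial derivatives L_u = ∂L/∂u, L_v = ∂L/∂v, L_w = ∂L/∂w with respect to its last three arguments. For (y_0, y_1, …, y_n) ∈ ℝ^{n+1} define the discrete functional J(y_0,…,y_n) = Σ_{i=1}^{n} L(x_{i−1}, x_i, y_{i−1}, y_i, (y_i − y_{i−1})/Δx_{i−1}) · Δx_{i−1}. If ŷ = (ŷ_0, …, ŷ_n) with ŷ_0 = α and ŷ_n = β is a local extremum (a local minimum or a local maximum) of J among all (y_0,…,y_n) with y_0 = α and y_n = β, then the discrete Euler–Lagrange equations hold: for every i ∈ {1, …, n−1}, L_u(x_i, x_{i+1}, ŷ_i, ŷ_{i+1}, Δŷ_i/Δx_i) · (Δx_i/Δx_{i−1}) + L_v(x_{i−1}, x_i, ŷ_{i−1}, ŷ_i, Δŷ_{i−1}/Δx_{i−1})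 = [ L_w(x_i, x_{i+1}, ŷ_i, ŷ_{i+1}, Δŷ_i/Δx_i) − L_w(x_{i−1}, x_i, ŷ_{i−1}, ŷ_i, Δŷ_{i−1}/Δx_{i−1}) ] / Δx_{i−1}, where Δŷ_i = ŷ_{i+1} − ŷ_i. -/
/-!
Perturbing only the node `y i`, the function `z ↦ J (update ŷ i z)` has a local extremum at
`ŷ i`, so its derivative vanishes there. Only the `i`-th and `(i+1)`-th summands of `J` depend on
`y i`, through both a position argument and the slope `(v - u) / Δx`; since the partial
derivatives of `L` are continuous, `L` is jointly differentiable and the chain rule gives their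
derivatives `L_v Δx_{i-1} + L_w` and `L_u Δx_i - L_w`. Dividing the vanishing sum by `Δx_{i-1}`
gives the discrete Euler–Lagrange equation.
-/

open Filter Function Set

theorem hasDerivAt_comp_of_continuous_partials {F F₁ F₂ : ℝ → ℝ → ℝ}
    (hF₁ : ∀ a b, HasDerivAt (F · b) (F₁ a b) a) (hF₂ : ∀ a b, HasDerivAt (F a ·) (F₂ a b) b)
    (hF₁c : Continuous (uncurry F₁)) (hF₂c : Continuous (uncurry F₂))
    {g : ℝ → ℝ} {g' z : ℝ} (hg : HasDerivAt g g' z) :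
    HasDerivAt (fun z => F z (g z)) (F₁ z (g z) + F₂ z (g z) * g') z := by
  have hF := (hasStrictFDerivAt_uncurry_coprod (u := (z, g z))
      (f₁ := fun a b => (1 : ℝ →L[ℝ] ℝ).smulRight (F₁ a b))
      (f₂ := fun a b => (1 : ℝ →L[ℝ] ℝ).smulRight (F₂ a b))
      (Eventually.of_forall fun p => (hF₁ p.1 p.2).hasFDerivAt)
      (Eventually.of_forall fun p => (hF₂ p.1 p.2).hasFDerivAt)
      ((ContinuousLinearMap.smulRightL ℝ ℝ ℝ 1).continuous.comp hF₁c).continuousAt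
      ((ContinuousLinearMap.smulRightL ℝ ℝ ℝ 1).continuous.comp hF₂c).continuousAt).hasFDerivAt
  simpa [HasUncurry.uncurry, comp_def, mul_comm] using
    hF.comp_hasDerivAt z ((hasDerivAt_id z).prodMk hg)

theorem IsLocalExtrOn.isLocalExtr_update {ι α β : Type*} [DecidableEq ι] [TopologicalSpace α]
    [Preorder β] {f : (ι → α) → β} {s : Set (ι → α)} {y : ι → α} {i : ι}
    (hf : IsLocalExtrOn f s y) (hs : ∀ z, update y i z ∈ s) :
    IsLocalExtr (fun z => f (update y i z)) (y i) := by
  rw [← update_eq_self i y] at hf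
  rw [← isLocalExtrOn_univ_iff]
  exact hf.comp_continuousOn _ (fun z _ => hs z) (by fun_prop) trivial

theorem hasDerivAt_slope_term_right {F F₁ F₂ : ℝ → ℝ → ℝ}
    (hF₁ : ∀ a b, HasDerivAt (F · b) (F₁ a b) a) (hF₂ : ∀ a b, HasDerivAt (F a ·) (F₂ a b) b)
    (hF₁c : Continuous (uncurry F₁)) (hF₂c : Continuous (uncurry F₂)) {h : ℝ} (hh : h ≠ 0)
    (u v : ℝ) :
    HasDerivAt (fun v => F v ((v - u) / h) * h)
      (F₁ v ((v - u) / h) * h + F₂ v ((v - u) / h)) v := by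
  refine ((hasDerivAt_comp_of_continuous_partials hF₁ hF₂ hF₁c hF₂c
    (((hasDerivAt_id v).sub_const u).div_const h)).mul_const h).congr_deriv ?_
  simp only [id]
  field_simp

theorem hasDerivAt_slope_term_left {F F₁ F₂ : ℝ → ℝ → ℝ}
    (hF₁ : ∀ a b, HasDerivAt (F · b) (F₁ a b) a) (hF₂ : ∀ a b, HasDerivAt (F a ·) (F₂ a b) b)
    (hF₁c : Continuous (uncurry F₁)) (hF₂c : Continuous (uncurry F₂)) {h : ℝ} (hh : h ≠ 0)
    (u v : ℝ) :
    HasDerivAt (fun u => F u ((v - u) / h) * h)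
      (F₁ u ((v - u) / h) * h - F₂ u ((v - u) / h)) u := by
  refine ((hasDerivAt_comp_of_continuous_partials hF₁ hF₂ hF₁c hF₂c
    (((hasDerivAt_id u).const_sub v).div_const h)).mul_const h).congr_deriv ?_
  simp only [id]
  field_simp
  ring

theorem hasDerivAt_sum_Icc_update {ℓ : ℕ → ℝ → ℝ → ℝ} {y : ℕ → ℝ} {n i : ℕ} (hi : 1 ≤ i)
    (hin : i < n) {a b : ℝ} (ha : HasDerivAt (ℓ i (y (i - 1))) a (y i))
    (hb : HasDerivAt (ℓ (i + 1) · (y (i + 1))) b (y i)) :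
    HasDerivAt (fun z => ∑ k ∈ Finset.Icc 1 n, ℓ k (update y i z (k - 1)) (update y i z k))
      (a + b) (y i) := by
  have hterm : ∀ k ∈ Finset.Icc 1 n,
      HasDerivAt (fun z => ℓ k (update y i z (k - 1)) (update y i z k))
        ((if k = i then a else 0) + (if k = i + 1 then b else 0)) (y i) := by
    intro k hk
    rw [Finset.mem_Icc] at hk
    rcases eq_or_ne k i with rfl | hki
    · simpa [update_of_ne (show k - 1 ≠ k by omega)] using ha
    rcases eq_or_ne k (i + 1) with rfl | hki1
    · simpa [update_of_ne (show i + 1 ≠ i by omega)] using hb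
    simpa [hki, hki1, update_of_ne hki, update_of_ne (show k - 1 ≠ i by omega)]
      using hasDerivAt_const (y i) (ℓ k (y (k - 1)) (y k))
  have hsum : ∑ k ∈ Finset.Icc 1 n, ((if k = i then a else 0) + (if k = i + 1 then b else 0)) =
      a + b := by
    rw [Finset.sum_add_distrib, Finset.sum_ite_eq', Finset.sum_ite_eq', if_pos, if_pos] <;>
      simp only [Finset.mem_Icc] <;> omega
  simpa only [hsum] using HasDerivAt.fun_sum hterm

theorem guseinov_discrete_euler_lagrange_general
    (n : ℕ)
    (x : ℕ → ℝ) (hx : ∀ i, i < n → x i < x (i + 1))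
    (L Lu Lv Lw : ℝ → ℝ → ℝ → ℝ → ℝ → ℝ)
    (hLu : ∀ s t u v w, HasDerivAt (fun u' => L s t u' v w) (Lu s t u v w) u)
    (hLv : ∀ s t u v w, HasDerivAt (fun v' => L s t u v' w) (Lv s t u v w) v)
    (hLw : ∀ s t u v w, HasDerivAt (fun w' => L s t u v w') (Lw s t u v w) w)
    (hLuC : ∀ s t, Continuous fun p : ℝ × ℝ × ℝ => Lu s t p.1 p.2.1 p.2.2)
    (hLvC : ∀ s t, Continuous fun p : ℝ × ℝ × ℝ => Lv s t p.1 p.2.1 p.2.2)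
    (hLwC : ∀ s t, Continuous fun p : ℝ × ℝ × ℝ => Lw s t p.1 p.2.1 p.2.2)
    (α β : ℝ)
    (J : (ℕ → ℝ) → ℝ)
    (hJ : ∀ y : ℕ → ℝ, J y =
      ∑ i ∈ Finset.Icc 1 n,
        L (x (i - 1)) (x i) (y (i - 1)) (y i)
          ((y i - y (i - 1)) / (x i - x (i - 1))) * (x i - x (i - 1)))
    (yhat : ℕ → ℝ) (hyhat0 : yhat 0 = α) (hyhatn : yhat n = β)
    (hext : IsLocalExtrOn J {y : ℕ → ℝ | y 0 = α ∧ y n = β} yhat) :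
    ∀ i, 1 ≤ i → i ≤ n - 1 →
      Lu (x i) (x (i + 1)) (yhat i) (yhat (i + 1))
          ((yhat (i + 1) - yhat i) / (x (i + 1) - x i)) *
          ((x (i + 1) - x i) / (x i - x (i - 1))) +
        Lv (x (i - 1)) (x i) (yhat (i - 1)) (yhat i)
          ((yhat i - yhat (i - 1)) / (x i - x (i - 1))) =
        (Lw (x i) (x (i + 1)) (yhat i) (yhat (i + 1))
            ((yhat (i + 1) - yhat i) / (x (i + 1) - x i)) -
          Lw (x (i - 1)) (x i) (yhat (i - 1)) (yhat i)
            ((yhat i - yhat (i - 1)) / (x i - x (i - 1)))) /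
          (x i - x (i - 1)) := by
  intro i hi hin
  have hΔ₀ : x i - x (i - 1) ≠ 0 := by
    have := hx (i - 1) (by omega)
    rw [Nat.sub_add_cancel hi] at this
    exact (sub_pos.2 this).ne'
  have hΔ₁ : x (i + 1) - x i ≠ 0 := (sub_pos.2 (hx i (by omega))).ne'
  have hcrit := hext.isLocalExtr_update (i := i) fun z =>
    ⟨by rw [update_of_ne (by omega), hyhat0], by rw [update_of_ne (by omega), hyhatn]⟩
  have hderiv := hasDerivAt_sum_Icc_update (ℓ := fun k u v =>
      L (x (k - 1)) (x k) u v ((v - u) / (x k - x (k - 1))) * (x k - x (k - 1)))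
    (y := yhat) (n := n) hi (by omega)
    (hasDerivAt_slope_term_right (hLv _ _ _) (hLw _ _ _)
      ((hLvC _ _).comp (continuous_const.prodMk continuous_id))
      ((hLwC _ _).comp (continuous_const.prodMk continuous_id)) hΔ₀ _ _)
    (hasDerivAt_slope_term_left (fun u w => hLu _ _ u _ w) (fun u w => hLw _ _ u _ w)
      ((hLuC _ _).comp (continuous_fst.prodMk (continuous_const.prodMk continuous_snd)))
      ((hLwC _ _).comp (continuous_fst.prodMk (continuous_const.prodMk continuous_snd))) hΔ₁ _ _)
  have hEL := hcrit.hasDerivAt_eq_zero (by simpa only [hJ] using hderiv)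
  simp only [Nat.add_sub_cancel] at hEL
  field_simp
  linarith

/-- Guseinov's discrete Euler–Lagrange equations: if `yhat` is a local extremum of the
discrete functional `J y = ∑_{i=1}^{n} L(x_{i-1}, x_i, y_{i-1}, y_i,
(y_i - y_{i-1})/(x_i - x_{i-1})) · (x_i - x_{i-1})` among all `y` with `y 0 = α` and
`y n = β`, then the discrete Euler–Lagrange equations hold for `i = 1, …, n-1`. -/
theorem guseinov_discrete_euler_lagrange
    (n : ℕ) (hn : 2 ≤ n)
    (x : ℕ → ℝ) (hx : ∀ i, i < n → x i < x (i + 1))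
    (L Lu Lv Lw : ℝ → ℝ → ℝ → ℝ → ℝ → ℝ)
    (hLu : ∀ s t u v w, HasDerivAt (fun u' => L s t u' v w) (Lu s t u v w) u)
    (hLv : ∀ s t u v w, HasDerivAt (fun v' => L s t u v' w) (Lv s t u v w) v)
    (hLw : ∀ s t u v w, HasDerivAt (fun w' => L s t u v w') (Lw s t u v w) w)
    (hLuC : ∀ s t, Continuous fun p : ℝ × ℝ × ℝ => Lu s t p.1 p.2.1 p.2.2)
    (hLvC : ∀ s t, Continuous fun p : ℝ × ℝ × ℝ => Lv s t p.1 p.2.1 p.2.2)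
    (hLwC : ∀ s t, Continuous fun p : ℝ × ℝ × ℝ => Lw s t p.1 p.2.1 p.2.2)
    (α β : ℝ)
    (J : (ℕ → ℝ) → ℝ)
    (hJ : ∀ y : ℕ → ℝ, J y =
      ∑ i ∈ Finset.Icc 1 n,
        L (x (i - 1)) (x i) (y (i - 1)) (y i)
          ((y i - y (i - 1)) / (x i - x (i - 1))) * (x i - x (i - 1)))
    (yhat : ℕ → ℝ) (hyhat0 : yhat 0 = α) (hyhatn : yhat n = β)
    (hext : IsLocalExtrOn J {y : ℕ → ℝ | y 0 = α ∧ y n = β} yhat) :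
    ∀ i, 1 ≤ i → i ≤ n - 1 →
      Lu (x i) (x (i + 1)) (yhat i) (yhat (i + 1))
          ((yhat (i + 1) - yhat i) / (x (i + 1) - x i)) *
          ((x (i + 1) - x i) / (x i - x (i - 1))) +
        Lv (x (i - 1)) (x i) (yhat (i - 1)) (yhat i)
          ((yhat i - yhat (i - 1)) / (x i - x (i - 1))) =
        (Lw (x i) (x (i + 1)) (yhat i) (yhat (i + 1))
            ((yhat (i + 1) - yhat i) / (x (i + 1) - x i)) -
          Lw (x (i - 1)) (x i) (yhat (i - 1)) (yhat i)
            ((yhat i - yhat (i - 1)) / (x i - x (i - 1)))) /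
          (x i - x (i - 1)) :=
  guseinov_discrete_euler_lagrange_general n x hx L Lu Lv Lw hLu hLv hLw hLuC hLvC hLwC α β J hJ
    yhat hyhat0 hyhatn hext
end

section
/- Let (y_n)_{n} be any sequence of Lipschitz functions y_n : [0,1] → ℝ with y_n(0) = 0 and y_n(1) = 1 such that y_n(x) → x^{1/3} as n → ∞ for almost every x ∈ [0,1]. Then I[y_n] → ∞ as n → ∞. -/
open MeasureTheory Filter

/-- The Manià functional `I[y] = ∫₀¹ (y(x)³ - x)² (y'(x))⁶ dx`. -/
noncomputable def maniaFunctional (y : ℝ → ℝ) : ℝ :=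
  ∫ x in (0:ℝ)..1, (y x ^ 3 - x) ^ 2 * deriv y x ^ 6

/-!
Since `t ↦ t³` is increasing, `y x < x^{1/3} / 2` exactly when `8 y(x)³ < x`. A Lipschitz `y` with
`y 0 = 0` satisfies `8 y³ < x` just to the right of `0`, while a.e. convergence to `x^{1/3}` gives
arbitrarily small `x₀` with `x₀ < 8 yₙ(x₀)³` for all large `n`. Let `b ≤ x₀` be the first point
where `8 y³ ≥ x`. On `[b/8, b]` the weight `(y³ - x)²` is at least `(7b/64)²`, while `y` climbs
from at most `b^{1/3}/4` to at least `b^{1/3}/2`; by the fundamental theorem of calculus for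
Lipschitz functions and Jensen's inequality for `t ↦ t⁶`, this costs `∫ y'⁶ ≳ b⁻³`, so
`I[y] ≳ b⁻¹ ≥ x₀⁻¹`.
-/

open Set Topology NNReal

section Lipschitz

variable {g : ℝ → ℝ} {K : ℝ≥0} {a b : ℝ}

theorem LipschitzOnWith.abs_deriv_le (hg : LipschitzOnWith K g (Icc a b)) {x : ℝ}
    (hx : x ∈ Ioo a b) : |deriv g x| ≤ K :=
  norm_deriv_le_of_lipschitzOn (Icc_mem_nhds hx.1 hx.2) hg

theorem LipschitzOnWith.integrableOn_deriv_pow (hg : LipschitzOnWith K g (Icc a b)) (n : ℕ) :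
    IntegrableOn (fun x => deriv g x ^ n) (Icc a b) := by
  rw [integrableOn_Icc_iff_integrableOn_Ioo]
  refine Measure.integrableOn_of_bounded (M := K ^ n) measure_Ioo_lt_top.ne
    ((measurable_deriv g).pow_const n).aestronglyMeasurable ?_
  filter_upwards [ae_restrict_mem measurableSet_Ioo] with x hx
  rw [norm_pow]
  exact pow_le_pow_left₀ (norm_nonneg _) (hg.abs_deriv_le hx) n

theorem intervalAverage_pow_le {f : ℝ → ℝ} {n : ℕ} (hn : Even n) (hab : a < b)
    (hf : IntervalIntegrable f volume a b)
    (hfn : IntervalIntegrable (fun x => f x ^ n) volume a b) :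
    (⨍ x in a..b, f x) ^ n ≤ ⨍ x in a..b, f x ^ n := by
  rw [uIoc_of_le hab.le]
  exact hn.convexOn_pow.map_set_average_le (continuous_pow n).continuousOn isClosed_univ
    (by simp [hab]) measure_Ioc_lt_top.ne (by simp) hf.1 hfn.1

theorem LipschitzOnWith.slope_pow_le_intervalAverage_deriv_pow
    (hg : LipschitzOnWith K g (Icc a b)) {n : ℕ} (hn : Even n) (hab : a < b) :
    slope g a b ^ n ≤ ⨍ x in a..b, deriv g x ^ n := by
  have hac : AbsolutelyContinuousOnInterval g a b :=
    (uIcc_of_le hab.le ▸ hg).absolutelyContinuousOnInterval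
  rw [slope_def_field, ← hac.integral_deriv_eq_sub, ← interval_average_eq_div]
  exact intervalAverage_pow_le hn hab hac.intervalIntegrable_deriv
    ((intervalIntegrable_iff_integrableOn_Icc_of_le hab.le).2 (hg.integrableOn_deriv_pow n))

theorem LipschitzOnWith.integrableOn_maniaIntegrand (hg : LipschitzOnWith K g (Icc a b)) :
    IntegrableOn (fun x => (g x ^ 3 - x) ^ 2 * deriv g x ^ 6) (Icc a b) :=
  (hg.integrableOn_deriv_pow 6).continuousOn_mul
    (((hg.continuousOn.pow 3).sub continuousOn_id).pow 2) isCompact_Icc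

end Lipschitz

theorem sq_le_mul_sub_pow_six {u v b : ℝ} (hb : 0 < b) (hu : b ≤ 8 * u ^ 3)
    (hv : 64 * v ^ 3 ≤ b) : b ^ 2 ≤ 4096 * (u - v) ^ 6 := by
  have hvu : v ≤ u / 2 := (Odd.pow_le_pow (n := 3) (by decide)).1 (by linarith)
  have hu0 : 0 < u := (Odd.pow_pos_iff (n := 3) (by decide)).1 (by linarith)
  calc b ^ 2 ≤ (8 * u ^ 3) ^ 2 := pow_le_pow_left₀ hb.le hu 2
    _ = 4096 * (u / 2) ^ 6 := by ring
    _ ≤ 4096 * (u - v) ^ 6 := by gcongr; linarith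

theorem le_maniaFunctional_of_crossing {g : ℝ → ℝ} {K : ℝ≥0} {b : ℝ}
    (hg : LipschitzOnWith K g (Icc 0 1)) (hb : b ∈ Ioc 0 1)
    (hbelow : ∀ x ∈ Ioo 0 b, 8 * g x ^ 3 ≤ x) (hcross : b ≤ 8 * g b ^ 3) :
    b⁻¹ / 175616 ≤ maniaFunctional g := by
  obtain ⟨hb0, hb1⟩ := hb
  set m := b / 8 with hm
  have hmb : m < b := by linarith
  have hL : b - m = 7 * b / 8 := by ring
  have hslope : slope g m b ^ 6 ≤ ⨍ x in m..b, deriv g x ^ 6 :=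
    (hg.mono (Icc_subset_Icc (by positivity) hb1)).slope_pow_le_intervalAverage_deriv_pow
      (by decide) hmb
  have hjump : b ^ 2 ≤ 4096 * (g b - g m) ^ 6 :=
    sq_le_mul_sub_pow_six hb0 hcross (by linarith [hbelow m ⟨by positivity, hmb⟩])
  have hpointwise : ∀ x ∈ Ioo m b,
      (7 * b / 64) ^ 2 * deriv g x ^ 6 ≤ (g x ^ 3 - x) ^ 2 * deriv g x ^ 6 := by
    intro x hx
    have hgap : 7 * b / 64 < x - g x ^ 3 := by
      linarith [hbelow x ⟨by linarith [hx.1], hx.2⟩, hx.1]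
    exact mul_le_mul_of_nonneg_right (by nlinarith) (by positivity)
  have hF : IntervalIntegrable (fun x => (g x ^ 3 - x) ^ 2 * deriv g x ^ 6) volume 0 1 :=
    (intervalIntegrable_iff_integrableOn_Icc_of_le zero_le_one).2 hg.integrableOn_maniaIntegrand
  have hD : IntervalIntegrable (fun x => deriv g x ^ 6) volume m b :=
    (intervalIntegrable_iff_integrableOn_Icc_of_le hmb.le).2
      (hg.integrableOn_deriv_pow 6 |>.mono_set (Icc_subset_Icc (by positivity) hb1))
  calc b⁻¹ / 175616 = (7 * b / 64) ^ 2 * (b - m) * (b ^ 2 / 4096 / (b - m) ^ 6) := by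
        rw [hL]; field_simp; ring
    _ ≤ (7 * b / 64) ^ 2 * (b - m) * slope g m b ^ 6 := by
        rw [slope_def_field, div_pow (g b - g m)]
        gcongr
        linarith
    _ ≤ (7 * b / 64) ^ 2 * (b - m) * ⨍ x in m..b, deriv g x ^ 6 :=
        mul_le_mul_of_nonneg_left hslope (by positivity)
    _ = ∫ x in m..b, (7 * b / 64) ^ 2 * deriv g x ^ 6 := by
        rw [interval_average_eq_div, intervalIntegral.integral_const_mul, mul_assoc,
          mul_div_cancel₀ _ (sub_ne_zero.2 hmb.ne')]
    _ ≤ ∫ x in m..b, (g x ^ 3 - x) ^ 2 * deriv g x ^ 6 :=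
        intervalIntegral.integral_mono_on_of_le_Ioo hmb.le (hD.const_mul _)
          (hF.mono_set (by rw [uIcc_of_le hmb.le, uIcc_of_le zero_le_one]; gcongr; positivity))
          hpointwise
    _ ≤ maniaFunctional g :=
        intervalIntegral.integral_mono_interval (by positivity) hmb.le hb1
          (Eventually.of_forall fun x => by positivity) hF

theorem exists_first_nonneg {φ : ℝ → ℝ} {a c : ℝ} (hφ : ContinuousOn φ (Icc a c)) (hac : a < c)
    (hc : 0 ≤ φ c) (hneg : ∀ᶠ x in 𝓝[>] a, φ x < 0) :
    ∃ b ∈ Ioc a c, 0 ≤ φ b ∧ ∀ x ∈ Ioo a b, φ x < 0 := by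
  obtain ⟨u, hau, hu⟩ := mem_nhdsGT_iff_exists_Ioo_subset.1 hneg
  set d := min u c
  have had : a < d := lt_min hau hac
  set S := Icc d c ∩ φ ⁻¹' Ici 0
  have hS : IsClosed S :=
    (hφ.mono (Icc_subset_Icc had.le le_rfl)).preimage_isClosed_of_isClosed isClosed_Icc isClosed_Ici
  have hSbdd : BddBelow S := ⟨d, fun x hx => hx.1.1⟩
  obtain ⟨⟨hdb, hbc⟩, hb⟩ : sInf S ∈ S := hS.csInf_mem ⟨c, ⟨min_le_right u c, le_rfl⟩, hc⟩ hSbdd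
  refine ⟨sInf S, ⟨had.trans_le hdb, hbc⟩, hb, fun x hx => ?_⟩
  by_cases hxd : x < d
  · exact hu ⟨hx.1, hxd.trans_le (min_le_left u c)⟩
  · by_contra! hx0
    exact hx.2.not_ge (csInf_le hSbdd ⟨⟨not_lt.1 hxd, hx.2.le.trans hbc⟩, hx0⟩)

theorem LipschitzOnWith.eventually_eight_mul_pow_three_lt {g : ℝ → ℝ} {K : ℝ≥0}
    (hg : LipschitzOnWith K g (Icc 0 1)) (hg0 : g 0 = 0) :
    ∀ᶠ x in 𝓝[>] 0, 8 * g x ^ 3 < x := by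
  have hlim : Tendsto (fun x : ℝ => 8 * (K : ℝ) ^ 3 * x ^ 2) (𝓝[>] 0) (𝓝 0) :=
    tendsto_nhdsWithin_of_tendsto_nhds ((by fun_prop : Continuous fun x : ℝ =>
      8 * (K : ℝ) ^ 3 * x ^ 2).tendsto' 0 0 (by simp))
  filter_upwards [hlim.eventually (gt_mem_nhds one_pos), Ioo_mem_nhdsGT zero_lt_one]
    with x hsmall hx
  have habs : |g x| ≤ K * x := by
    simpa [hg0, Real.dist_eq, abs_of_pos hx.1] using
      hg.dist_le_mul x (Ioo_subset_Icc_self hx) 0 (left_mem_Icc.2 zero_le_one)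
  calc 8 * g x ^ 3 ≤ 8 * |g x| ^ 3 := by
        have := le_abs_self (g x ^ 3)
        rw [abs_pow] at this
        linarith
    _ ≤ 8 * (K * x) ^ 3 := by gcongr
    _ = 8 * (K : ℝ) ^ 3 * x ^ 2 * x := by ring
    _ < 1 * x := by gcongr; exact hx.1
    _ = x := one_mul x

theorem le_maniaFunctional_of_le_eight_mul_pow_three {g : ℝ → ℝ} {K : ℝ≥0} {x₀ : ℝ}
    (hg : LipschitzOnWith K g (Icc 0 1)) (hg0 : g 0 = 0) (hx₀ : x₀ ∈ Ioc 0 1)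
    (hcross : x₀ ≤ 8 * g x₀ ^ 3) :
    x₀⁻¹ / 175616 ≤ maniaFunctional g := by
  have hgc : ContinuousOn g (Icc 0 x₀) := hg.continuousOn.mono (Icc_subset_Icc le_rfl hx₀.2)
  obtain ⟨b, ⟨hb0, hbx⟩, hbcross, hbelow⟩ :=
    exists_first_nonneg (φ := fun x => 8 * g x ^ 3 - x) (by fun_prop) hx₀.1 (sub_nonneg.2 hcross)
      ((hg.eventually_eight_mul_pow_three_lt hg0).mono fun x hx => sub_neg.2 hx)
  calc x₀⁻¹ / 175616 ≤ b⁻¹ / 175616 := by gcongr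
    _ ≤ maniaFunctional g :=
      le_maniaFunctional_of_crossing hg ⟨hb0, hbx.trans hx₀.2⟩
        (fun x hx => (sub_neg.1 (hbelow x hx)).le) (sub_nonneg.1 hbcross)

theorem frequently_nhdsGT_of_ae_restrict_Icc {P : ℝ → Prop} {a c : ℝ} (hac : a < c)
    (h : ∀ᵐ x ∂volume.restrict (Icc a c), P x) : ∃ᶠ x in 𝓝[>] a, P x := by
  refine frequently_iff.2 fun {U} hU => ?_
  obtain ⟨u, hau, hu⟩ := mem_nhdsGT_iff_exists_Ioo_subset.1 hU
  have hsub : Ioo a (min u c) ⊆ Icc a c :=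
    Ioo_subset_Icc_self.trans (Icc_subset_Icc le_rfl (min_le_right u c))
  have : NeBot (ae (volume.restrict (Ioo a (min u c)))) := by
    rw [ae_restrict_neBot, Real.volume_Ioo, Ne, ENNReal.ofReal_eq_zero, not_le]
    exact sub_pos.2 (lt_min hau hac)
  obtain ⟨x, hxP, hx⟩ :=
    ((ae_restrict_mem measurableSet_Ioo).and (ae_mono (Measure.restrict_mono hsub le_rfl) h)).exists
  exact ⟨x, hu ⟨hxP.1, hxP.2.trans_le (min_le_left u c)⟩, hx⟩

theorem mania_blowup_along_lipschitz_sequences_general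
    (y : ℕ → ℝ → ℝ)
    (hLip : ∀ n, ∃ K : NNReal, LipschitzOnWith K (y n) (Set.Icc (0:ℝ) 1))
    (h0 : ∀ n, y n 0 = 0)
    (hconv : ∀ᵐ x ∂(volume.restrict (Set.Icc (0:ℝ) 1)),
      Tendsto (fun n => y n x) atTop (nhds (x ^ (1/3 : ℝ)))) :
    Tendsto (fun n => maniaFunctional (y n)) atTop atTop := by
  choose K hK using hLip
  refine tendsto_atTop.2 fun M => ?_
  have hsmall : ∀ᶠ x₀ in 𝓝[>] (0 : ℝ), M ≤ x₀⁻¹ / 175616 ∧ x₀ ∈ Ioo 0 1 :=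
    ((tendsto_inv_nhdsGT_zero.atTop_div_const (by norm_num)).eventually_ge_atTop M).and
      (Ioo_mem_nhdsGT zero_lt_one)
  obtain ⟨x₀, hlim, hM, hx₀⟩ :=
    ((frequently_nhdsGT_of_ae_restrict_Icc zero_lt_one hconv).and_eventually hsmall).exists
  have hroot : (x₀ ^ (1/3 : ℝ)) ^ 3 = x₀ := by
    rw [one_div]; exact_mod_cast Real.rpow_inv_natCast_pow hx₀.1.le three_ne_zero
  have hcube : Tendsto (fun n => 8 * y n x₀ ^ 3) atTop (𝓝 (8 * x₀)) := by
    simpa only [hroot] using (hlim.pow 3).const_mul 8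
  filter_upwards [hcube.eventually_const_lt (by linarith [hx₀.1] : x₀ < 8 * x₀)] with n hn
  exact hM.trans
    (le_maniaFunctional_of_le_eight_mul_pow_three (hK n) (h0 n) (Ioo_subset_Ioc_self hx₀) hn.le)

/-- Ferriero's theorem: for any sequence of Lipschitz trajectories `yₙ : [0,1] → ℝ` with
`yₙ(0) = 0` and `yₙ(1) = 1` converging almost everywhere on `[0,1]` to `ŷ(x) = x^(1/3)`,
the Manià functional `I[yₙ]` tends to `∞`. -/
theorem mania_blowup_along_lipschitz_sequences
    (y : ℕ → ℝ → ℝ)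
    (hLip : ∀ n, ∃ K : NNReal, LipschitzOnWith K (y n) (Set.Icc (0:ℝ) 1))
    (h0 : ∀ n, y n 0 = 0) (h1 : ∀ n, y n 1 = 1)
    (hconv : ∀ᵐ x ∂(volume.restrict (Set.Icc (0:ℝ) 1)),
      Tendsto (fun n => y n x) atTop (nhds (x ^ (1/3 : ℝ)))) :
    Tendsto (fun n => maniaFunctional (y n)) atTop atTop :=
  mania_blowup_along_lipschitz_sequences_general y hLip h0 hconv
end

section
/- There exists a constant c > 0 such that I[y] ≥ c for every Lipschitz function y : [0,1] → ℝ with y(0) = 0 and y(1) = 1. Consequently, the infimum of I over Lipschitz admissible functions is strictly greater than the infimum of I over absolutely continuous admissible functions, which equals 0; that is, the Manià functional exhibits the Lavrentiev phenomenon. -/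
open MeasureTheory

/-- `y : ℝ → ℝ` is absolutely continuous on `[0,1]`: it is the indefinite integral of an
integrable function `g` (its almost-everywhere derivative). -/
def IsAbsContOnUnitInterval (y : ℝ → ℝ) : Prop :=
  ∃ g : ℝ → ℝ, IntegrableOn g (Set.Icc (0:ℝ) 1) ∧
    ∀ x ∈ Set.Icc (0:ℝ) 1, y x = y 0 + ∫ t in (0:ℝ)..x, g t

/-!
For an admissible `y` with Lipschitz constant `K` we have `|y x| ≤ K x`, so `y³ ≤ x / 8` near `0`,
while `y(1)³ = 1 > 1 / 8`. Hence there is a first point `b > 0` with `y(b)³ = b / 8`, and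
`y³ ≤ x / 8` on `[0, b]`. On `[b / 2, b]` the weight `(y³ - x)²` is at least `(7b / 16)²`, and `y`
rises there by at least `y(b) / 5`, where `y(b)⁶ = b² / 64`; Jensen's inequality for `t ↦ t⁶` turns
this rise into `∫_{b/2}^b y'⁶ ≥ 32 / (10⁶ b³)`. Altogether `I[y] ≥ 49 / (8·10⁶ b) ≥ 49 / (8·10⁶)`.
The absolutely continuous `x ↦ x^{1/3}` makes the weight vanish identically, so that infimum is `0`.
-/

open Set

theorem Even.pow_interval_average_le {n : ℕ} (hn : Even n) {g : ℝ → ℝ} {a b : ℝ} (hab : a ≠ b)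
    (hg : IntervalIntegrable g volume a b)
    (hgn : IntervalIntegrable (fun x => g x ^ n) volume a b) :
    (⨍ x in a..b, g x) ^ n ≤ ⨍ x in a..b, g x ^ n :=
  hn.convexOn_pow.map_set_average_le (continuous_pow n).continuousOn isClosed_univ
    (by simp [Real.volume_uIoc, sub_eq_zero, hab.symm]) (by simp [Real.volume_uIoc])
    (ae_of_all _ fun _ => mem_univ _) (intervalIntegrable_iff.mp hg) (intervalIntegrable_iff.mp hgn)

theorem ContinuousOn.exists_eq_zero_forall_le_zero {φ : ℝ → ℝ} {c d : ℝ} (hcd : c ≤ d)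
    (hφ : ContinuousOn φ (Icc c d)) (hc : φ c ≤ 0) (hd : 0 ≤ φ d) :
    ∃ b ∈ Icc c d, φ b = 0 ∧ ∀ x ∈ Icc c b, φ x ≤ 0 := by
  set Z := Icc c d ∩ φ ⁻¹' Ici 0
  have hZ : IsClosed Z := hφ.preimage_isClosed_of_isClosed isClosed_Icc isClosed_Ici
  have hZbdd : BddBelow Z := ⟨c, fun x hx => hx.1.1⟩
  have hbZ : sInf Z ∈ Z := hZ.csInf_mem ⟨d, ⟨hcd, le_rfl⟩, hd⟩ hZbdd
  set b := sInf Z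
  have hcb : c ≤ b := hbZ.1.1
  have hneg : ∀ x ∈ Icc c b, φ x ≤ 0 := by
    rcases hcb.eq_or_lt with hcb_eq | hcb_lt
    · intro x hx
      rw [← hcb_eq, Icc_self, mem_singleton_iff] at hx
      exact hx ▸ hc
    -- `φ < 0` on `[c, b)` by minimality of `b`, and the closed set `{φ ≤ 0}` contains its closure
    have hIco : Ico c b ⊆ Icc c b ∩ φ ⁻¹' Iic 0 := fun x hx =>
      ⟨Ico_subset_Icc_self hx, show φ x ≤ 0 from le_of_not_gt fun hpos =>
        hx.2.not_ge (csInf_le hZbdd ⟨⟨hx.1, hx.2.le.trans hbZ.1.2⟩, hpos.le⟩)⟩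
    have := closure_minimal hIco <|
      (hφ.mono (Icc_subset_Icc le_rfl hbZ.1.2)).preimage_isClosed_of_isClosed
        isClosed_Icc isClosed_Iic
    rw [closure_Ico hcb_lt.ne] at this
    exact fun x hx => (this hx).2
  exact ⟨b, hbZ.1, le_antisymm (hneg b ⟨hcb, le_rfl⟩) hbZ.2, hneg⟩

theorem pow_six_le_of_two_mul_pow_three_le {u v : ℝ} (hu : 0 ≤ u) (h : 2 * v ^ 3 ≤ u ^ 3) :
    u ^ 6 ≤ 5 ^ 6 * (u - v) ^ 6 := by
  have hv : v ≤ 4 / 5 * u :=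
    (Odd.pow_le_pow (n := 3) ⟨1, rfl⟩).mp (by nlinarith [pow_nonneg hu 3])
  calc u ^ 6 = 5 ^ 6 * (u / 5) ^ 6 := by ring
    _ ≤ 5 ^ 6 * (u - v) ^ 6 := by gcongr; linarith

namespace LipschitzWith

variable {K : NNReal} {f : ℝ → ℝ}

theorem intervalIntegrable_deriv_pow (hf : LipschitzWith K f) (n : ℕ) (a b : ℝ) :
    IntervalIntegrable (fun x => deriv f x ^ n) volume a b :=
  (intervalIntegrable_const (c := (K : ℝ) ^ n)).mono_fun
    ((measurable_deriv f).pow_const n).aestronglyMeasurable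
    (ae_of_all _ fun x => by
      simpa [abs_pow] using
        pow_le_pow_left₀ (norm_nonneg _) (norm_deriv_le_of_lipschitz hf (x₀ := x)) n)

theorem slope_pow_le_interval_average_deriv_pow (hf : LipschitzWith K f) {n : ℕ} (hn : Even n)
    {a b : ℝ} (hab : a ≠ b) : ((f b - f a) / (b - a)) ^ n ≤ ⨍ x in a..b, deriv f x ^ n := by
  have hac := (hf.lipschitzOnWith (s := uIcc a b)).absolutelyContinuousOnInterval
  rw [← hac.integral_deriv_eq_sub, ← interval_average_eq_div]
  exact hn.pow_interval_average_le hab hac.intervalIntegrable_deriv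
    (hf.intervalIntegrable_deriv_pow n a b)

theorem exists_first_cube_crossing (hf : LipschitzWith K f) (h0 : f 0 = 0) (h1 : f 1 = 1) :
    ∃ b ∈ Ioc (0 : ℝ) 1, f b ^ 3 = b / 8 ∧ ∀ x ∈ Icc 0 b, f x ^ 3 ≤ x / 8 := by
  have hK : 1 ≤ (K : ℝ) := by simpa [Real.dist_eq, h0, h1] using hf.dist_le_mul 1 0
  set x₀ : ℝ := (8 * (K : ℝ) ^ 3)⁻¹
  have hx₀ : 0 < x₀ := by positivity
  have hx₀_le : x₀ ≤ 1 := inv_le_one_of_one_le₀ (by nlinarith [one_le_pow₀ (n := 3) hK])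
  have hsmall : ∀ x ∈ Icc 0 x₀, f x ^ 3 ≤ x / 8 := by
    rintro x ⟨hx, hxx₀⟩
    have hfx : f x ≤ K * x := by
      simpa [Real.dist_eq, h0, abs_of_nonneg hx] using (abs_le.mp (hf.dist_le_mul x 0)).2
    have hx2 : x ^ 2 ≤ x₀ := by nlinarith
    calc f x ^ 3 ≤ (K * x) ^ 3 := (Odd.pow_le_pow ⟨1, rfl⟩).mpr hfx
      _ = K ^ 3 * x ^ 2 * x := by ring
      _ ≤ K ^ 3 * x₀ * x := by gcongr
      _ = x / 8 := by simp only [x₀]; field_simp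
  obtain ⟨b, hb, hb_eq, hb_le⟩ := ContinuousOn.exists_eq_zero_forall_le_zero
    (φ := fun x => 8 * f x ^ 3 - x) hx₀_le (by have := hf.continuous; fun_prop)
    (by linarith [hsmall x₀ ⟨hx₀.le, le_rfl⟩]) (by norm_num [h1])
  refine ⟨b, ⟨hx₀.trans_le hb.1, hb.2⟩, by linarith, fun x hx => ?_⟩
  rcases le_total x x₀ with h | h
  · exact hsmall x ⟨hx.1, h⟩
  · linarith [hb_le x ⟨h, hx.2⟩]

end LipschitzWith

theorem le_maniaFunctional_of_lipschitzWith {K : NNReal} {f : ℝ → ℝ} (hf : LipschitzWith K f)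
    (h0 : f 0 = 0) (h1 : f 1 = 1) : 49 / 8000000 ≤ maniaFunctional f := by
  obtain ⟨b, ⟨hb, hb1⟩, hfb, hle⟩ := hf.exists_first_cube_crossing h0 h1
  have hb2 : b / 2 < b := by linarith
  set I := ∫ x in b / 2..b, deriv f x ^ 6
  have hG : ∀ c d, IntervalIntegrable (fun x => (f x ^ 3 - x) ^ 2 * deriv f x ^ 6) volume c d :=
    fun c d => (hf.intervalIntegrable_deriv_pow 6 c d).continuousOn_mul
      (by have := hf.continuous; fun_prop)
  have hI : 32 * (f b - f (b / 2)) ^ 6 / b ^ 5 ≤ I := by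
    have h := hf.slope_pow_le_interval_average_deriv_pow (n := 6) ⟨3, rfl⟩ hb2.ne
    rw [interval_average_eq_div, show b - b / 2 = b / 2 by ring, div_pow,
      div_le_div_iff₀ (by positivity) (by positivity)] at h
    rw [div_le_iff₀ (by positivity)]
    nlinarith
  have hinc : b ^ 2 / 64 / 5 ^ 6 ≤ (f b - f (b / 2)) ^ 6 := by
    have hfb_nonneg : 0 ≤ f b :=
      (Odd.pow_nonneg_iff (n := 3) ⟨1, rfl⟩).mp (by rw [hfb]; positivity)
    have := pow_six_le_of_two_mul_pow_three_le hfb_nonneg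
      (v := f (b / 2)) (by linarith [hle (b / 2) ⟨by positivity, hb2.le⟩])
    rw [div_le_iff₀ (by positivity)]
    nlinarith
  have hweight : (7 * (b / 2) / 8) ^ 2 * I ≤
      ∫ x in b / 2..b, (f x ^ 3 - x) ^ 2 * deriv f x ^ 6 := by
    rw [← intervalIntegral.integral_const_mul]
    refine intervalIntegral.integral_mono_on hb2.le
      ((hf.intervalIntegrable_deriv_pow 6 _ _).const_mul _) (hG _ _) fun x hx => ?_
    have hfx := hle x ⟨by linarith [hx.1], hx.2⟩
    have hw : (7 * (b / 2) / 8) ^ 2 ≤ (f x ^ 3 - x) ^ 2 := by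
      rw [← neg_sub, neg_sq]
      gcongr
      linarith [hx.1]
    exact mul_le_mul_of_nonneg_right hw (by positivity)
  calc 49 / 8000000 ≤ 49 / 8000000 / b := le_div_self (by norm_num) hb hb1
    _ = 49 * b ^ 2 / 256 * (32 * (b ^ 2 / 64 / 5 ^ 6) / b ^ 5) := by field_simp; ring
    _ ≤ 49 * b ^ 2 / 256 * (32 * (f b - f (b / 2)) ^ 6 / b ^ 5) := by gcongr
    _ ≤ (7 * (b / 2) / 8) ^ 2 * I := by
        rw [show (7 * (b / 2) / 8) ^ 2 = 49 * b ^ 2 / 256 by ring]; gcongr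
    _ ≤ ∫ x in b / 2..b, (f x ^ 3 - x) ^ 2 * deriv f x ^ 6 := hweight
    _ ≤ maniaFunctional f := intervalIntegral.integral_mono_interval (by positivity) hb2.le hb1
        (ae_of_all _ fun x => by positivity) (hG 0 1)

theorem maniaFunctional_nonneg (y : ℝ → ℝ) : 0 ≤ maniaFunctional y :=
  intervalIntegral.integral_nonneg zero_le_one fun _ _ => by positivity

theorem maniaFunctional_congr {y f : ℝ → ℝ} (h : EqOn y f (Ioo 0 1)) :
    maniaFunctional y = maniaFunctional f := by
  simp only [maniaFunctional, intervalIntegral.integral_of_le zero_le_one,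
    integral_Ioc_eq_integral_Ioo]
  refine setIntegral_congr_fun measurableSet_Ioo fun x hx => ?_
  simp only [h hx, h.deriv isOpen_Ioo hx]

theorem le_maniaFunctional_of_lipschitzOnWith {K : NNReal} {y : ℝ → ℝ}
    (hy : LipschitzOnWith K y (Icc 0 1)) (h0 : y 0 = 0) (h1 : y 1 = 1) :
    49 / 8000000 ≤ maniaFunctional y := by
  obtain ⟨f, hf, hfy⟩ := hy.extend_real
  rw [maniaFunctional_congr (hfy.mono Ioo_subset_Icc_self)]
  exact le_maniaFunctional_of_lipschitzWith hf
    (by rw [← hfy ⟨le_rfl, zero_le_one⟩, h0]) (by rw [← hfy ⟨zero_le_one, le_rfl⟩, h1])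

theorem isAbsContOnUnitInterval_rpow {p : ℝ} (hp : 0 < p) :
    IsAbsContOnUnitInterval fun x => x ^ p := by
  refine ⟨fun t => p * t ^ (p - 1), ?_, fun x _ => ?_⟩
  · have h := intervalIntegral.intervalIntegrable_rpow' (a := 0) (b := 1) (r := p - 1)
      (by linarith)
    rw [intervalIntegrable_iff_integrableOn_Ioc_of_le zero_le_one,
      ← integrableOn_Icc_iff_integrableOn_Ioc] at h
    exact h.const_mul p
  · rw [intervalIntegral.integral_const_mul, integral_rpow (Or.inl (by linarith)),
      sub_add_cancel, Real.zero_rpow hp.ne']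
    field_simp
    simp [Real.zero_rpow hp.ne']

theorem maniaFunctional_rpow_inv_three : maniaFunctional (fun x => x ^ (3⁻¹ : ℝ)) = 0 := by
  rw [maniaFunctional, intervalIntegral.integral_congr (g := fun _ => 0) fun x hx => ?_]
  · simp
  have hx : 0 ≤ x := by simp only [uIcc_of_le zero_le_one, mem_Icc] at hx; exact hx.1
  have hcube : (x ^ (3⁻¹ : ℝ)) ^ 3 = x := by
    exact_mod_cast Real.rpow_inv_natCast_pow hx three_ne_zero
  simp [hcube]

/-- The Manià example exhibits the Lavrentiev phenomenon: there is a constant `c > 0`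
bounding `I[y]` from below for every Lipschitz admissible `y` (with `y 0 = 0`,
`y 1 = 1`), hence the infimum of `I` over Lipschitz admissible functions is strictly
greater than the infimum over absolutely continuous admissible functions, which is `0`. -/
theorem mania_lavrentiev_phenomenon :
    (∃ c : ℝ, 0 < c ∧
      ∀ y : ℝ → ℝ, (∃ K : NNReal, LipschitzOnWith K y (Set.Icc (0:ℝ) 1)) →
        y 0 = 0 → y 1 = 1 → c ≤ maniaFunctional y) ∧
    sInf {r : ℝ | ∃ y : ℝ → ℝ, IsAbsContOnUnitInterval y ∧
      y 0 = 0 ∧ y 1 = 1 ∧ maniaFunctional y = r} = 0 ∧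
    sInf {r : ℝ | ∃ y : ℝ → ℝ, IsAbsContOnUnitInterval y ∧
        y 0 = 0 ∧ y 1 = 1 ∧ maniaFunctional y = r} <
      sInf {r : ℝ | ∃ y : ℝ → ℝ,
        (∃ K : NNReal, LipschitzOnWith K y (Set.Icc (0:ℝ) 1)) ∧
        y 0 = 0 ∧ y 1 = 1 ∧ maniaFunctional y = r} := by
  have hLip : ∀ y : ℝ → ℝ, (∃ K : NNReal, LipschitzOnWith K y (Set.Icc (0:ℝ) 1)) →
      y 0 = 0 → y 1 = 1 → 49 / 8000000 ≤ maniaFunctional y :=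
    fun y ⟨_, hy⟩ => le_maniaFunctional_of_lipschitzOnWith hy
  have hAC : sInf {r : ℝ | ∃ y : ℝ → ℝ, IsAbsContOnUnitInterval y ∧
      y 0 = 0 ∧ y 1 = 1 ∧ maniaFunctional y = r} = 0 :=
    IsLeast.csInf_eq ⟨⟨_, isAbsContOnUnitInterval_rpow (by norm_num), by simp, by simp,
      maniaFunctional_rpow_inv_three⟩,
      by rintro r ⟨y, -, -, -, rfl⟩; exact maniaFunctional_nonneg y⟩
  refine ⟨⟨_, by norm_num, hLip⟩, hAC, ?_⟩
  rw [hAC]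
  refine (by norm_num : (0 : ℝ) < 49 / 8000000).trans_le ?_
  refine le_csInf ⟨_, id, ⟨1, LipschitzWith.id.lipschitzOnWith⟩, rfl, rfl, rfl⟩ ?_
  rintro r ⟨y, hy, h0, h1, rfl⟩
  exact hLip y hy h0 h1
end

section
/- For each integer n ≥ 1 let p_n : [0,1] → ℝ be the piecewise linear function with nodes x_i = i/n, i = 0, …, n, interpolating ŷ(x) = x^{1/3}; that is, p_n(i/n) = (i/n)^{1/3} for every i and p_n is affine on each subinterval [(i−1)/n, i/n]. Then each p_n is Lipschitz with p_n(0) = 0 and p_n(1) = 1, p_n converges to ŷ almost everywhere on [0,1], and I[p_n] → ∞ as n → ∞. -/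
/-!
On the cell `[k/n, (k+1)/n]` the interpolant is affine with slope
`n ((k+1)/n)^{1/3} - n (k/n)^{1/3} ∈ [0, n]`, so it is `n`-Lipschitz, and by subadditivity of
the cube root it stays within `n^{-1/3}` of `x^{1/3}`. On the first cell it is the line
`x ↦ n^{2/3} x`, along which the integrand `(n² x³ - x)² n⁴` integrates to `8n/105`. The
integrand is nonnegative, and integrable because the interpolant is Lipschitz, so
`I[p_n] ≥ 8n/105`.
-/

open MeasureTheory Filter

open Set

section CubeRoot

lemma rpow_one_third_pow_three {x : ℝ} (hx : 0 ≤ x) : (x ^ (1/3 : ℝ)) ^ 3 = x := by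
  rw [← Real.rpow_natCast, ← Real.rpow_mul hx]
  norm_num

lemma rpow_one_third_sub_le {a b : ℝ} (ha : 0 ≤ a) (hab : a ≤ b) :
    b ^ (1/3 : ℝ) - a ^ (1/3 : ℝ) ≤ (b - a) ^ (1/3 : ℝ) := by
  have h := Real.rpow_add_le_add_rpow (sub_nonneg.2 hab) ha (by norm_num : (0:ℝ) ≤ 1/3)
    (by norm_num)
  rw [sub_add_cancel] at h
  linarith

lemma slope_rpow_one_third_nonneg {l r : ℝ} (hl : 0 ≤ l) (hlr : l ≤ r) :
    0 ≤ slope (fun x : ℝ => x ^ (1/3 : ℝ)) l r :=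
  (slope_nonneg_iff_of_le hlr).2 (Real.rpow_le_rpow hl hlr (by norm_num))

lemma slope_rpow_one_third_le {l r : ℝ} (hl : 0 ≤ l) (hlr : l < r) (hrl : r - l ≤ 1) :
    slope (fun x : ℝ => x ^ (1/3 : ℝ)) l r ≤ (r - l)⁻¹ := by
  have hgap : r ^ (1/3 : ℝ) - l ^ (1/3 : ℝ) ≤ 1 :=
    (rpow_one_third_sub_le hl hlr.le).trans
      (Real.rpow_le_one (sub_nonneg.2 hlr.le) hrl (by norm_num))
  rw [slope_def_field, div_le_iff₀ (sub_pos.2 hlr), inv_mul_cancel₀ (sub_pos.2 hlr).ne']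
  exact hgap

lemma slope_rpow_one_third_segment_mem {k n : ℕ} (hk : k < n) :
    slope (fun x : ℝ => x ^ (1/3 : ℝ)) (k / n) ((k + 1) / n) ∈ Icc 0 (n : ℝ) := by
  have hn0 : (0 : ℝ) < n := by exact_mod_cast (k.zero_le.trans_lt hk)
  have hl : (0 : ℝ) ≤ k / n := by positivity
  have hlr : (k : ℝ) / n < (k + 1) / n := by gcongr; linarith
  have hwidth : ((k : ℝ) + 1) / n - k / n = (n : ℝ)⁻¹ := by field_simp; ring
  refine ⟨slope_rpow_one_third_nonneg hl hlr.le, ?_⟩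
  have h := slope_rpow_one_third_le hl hlr
    (by rw [hwidth]; exact inv_le_one_of_one_le₀ (by exact_mod_cast (show 1 ≤ n by omega)))
  rwa [hwidth, inv_inv] at h

end CubeRoot

section AffineOn

variable {q : ℝ → ℝ} {a b l r : ℝ}

lemma slope_eq_of_eqOn_affine (hlr : l < r) (hq : EqOn q (fun x => a * x + b) (Icc l r)) :
    slope q l r = a := by
  rw [slope_def_field, hq ⟨le_rfl, hlr.le⟩, hq ⟨hlr.le, le_rfl⟩]
  field_simp [(sub_pos.2 hlr).ne']
  ring

lemma deriv_eq_of_eqOn_affine (hq : EqOn q (fun x => a * x + b) (Icc l r)) {x : ℝ}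
    (hx : x ∈ Ioo l r) : deriv q x = a := by
  have hloc : q =ᶠ[nhds x] fun x => a * x + b :=
    Filter.eventually_of_mem (isOpen_Ioo.mem_nhds hx) fun y hy => hq (Ioo_subset_Icc_self hy)
  rw [hloc.deriv_eq]
  simp

lemma mem_Icc_of_eqOn_affine (ha : 0 ≤ a) (hq : EqOn q (fun x => a * x + b) (Icc l r))
    {x : ℝ} (hx : x ∈ Icc l r) : q x ∈ Icc (q l) (q r) := by
  have hlr : l ≤ r := hx.1.trans hx.2
  rw [hq hx, hq ⟨le_rfl, hlr⟩, hq ⟨hlr, le_rfl⟩]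
  exact ⟨by nlinarith [hx.1], by nlinarith [hx.2]⟩

lemma lipschitzOnWith_of_eqOn_affine {K : NNReal} (ha : |a| ≤ K)
    (hq : EqOn q (fun x => a * x + b) (Icc l r)) : LipschitzOnWith K q (Icc l r) := by
  refine LipschitzOnWith.of_dist_le_mul fun x hx y hy => ?_
  rw [hq hx, hq hy, Real.dist_eq, Real.dist_eq,
    show a * x + b - (a * y + b) = a * (x - y) by ring, abs_mul]
  exact mul_le_mul_of_nonneg_right ha (abs_nonneg _)

end AffineOn

lemma LipschitzOnWith.Icc_union {E : Type*} [PseudoMetricSpace E] {f : ℝ → E} {K : NNReal}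
    {a b c : ℝ} (hab : LipschitzOnWith K f (Icc a b)) (hbc : LipschitzOnWith K f (Icc b c)) :
    LipschitzOnWith K f (Icc a c) := by
  refine LipschitzOnWith.of_dist_le_mul fun x hx y hy => ?_
  wlog hxy : x ≤ y generalizing x y
  · rw [dist_comm, dist_comm x]
    exact this y hy x hx (le_of_not_ge hxy)
  rcases le_total y b with hyb | hby
  · exact hab.dist_le_mul x ⟨hx.1, hxy.trans hyb⟩ y ⟨hy.1, hyb⟩
  rcases le_total b x with hbx | hxb
  · exact hbc.dist_le_mul x ⟨hbx, hx.2⟩ y ⟨hby, hy.2⟩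
  calc dist (f x) (f y) ≤ dist (f x) (f b) + dist (f b) (f y) := dist_triangle _ _ _
    _ ≤ K * dist x b + K * dist b y :=
        add_le_add (hab.dist_le_mul x ⟨hx.1, hxb⟩ b ⟨hx.1.trans hxb, le_rfl⟩)
          (hbc.dist_le_mul b ⟨le_rfl, hby.trans hy.2⟩ y ⟨hby, hy.2⟩)
    _ = K * dist x y := by
        rw [Real.dist_eq, Real.dist_eq, Real.dist_eq, abs_of_nonpos (by linarith),
          abs_of_nonpos (by linarith), abs_of_nonpos (by linarith)]
        ring

noncomputable def maniaIntegrand (y : ℝ → ℝ) (x : ℝ) : ℝ :=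
  (y x ^ 3 - x) ^ 2 * deriv y x ^ 6

lemma maniaIntegrand_nonneg (y : ℝ → ℝ) (x : ℝ) : 0 ≤ maniaIntegrand y x := by
  unfold maniaIntegrand
  positivity

lemma intervalIntegrable_maniaIntegrand {y : ℝ → ℝ} {K : NNReal} {a b : ℝ} (hab : a ≤ b)
    (hy : LipschitzOnWith K y (Icc a b)) : IntervalIntegrable (maniaIntegrand y) volume a b := by
  rw [intervalIntegrable_iff_integrableOn_Ioo_of_le hab]
  obtain ⟨M, hM⟩ := isCompact_Icc.exists_bound_of_continuousOn hy.continuousOn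
  have hmeas : AEStronglyMeasurable (maniaIntegrand y) (volume.restrict (Ioo a b)) := by
    have hy' : AEStronglyMeasurable y (volume.restrict (Ioo a b)) :=
      (hy.continuousOn.mono Ioo_subset_Icc_self).aestronglyMeasurable measurableSet_Ioo
    exact ((hy'.pow 3).sub aestronglyMeasurable_id).pow 2 |>.mul
      ((measurable_deriv y).aestronglyMeasurable.pow 6)
  refine IntegrableOn.of_bound measure_Ioo_lt_top hmeas ((M ^ 3 + max |a| |b|) ^ 2 * K ^ 6)
    (ae_restrict_of_forall_mem measurableSet_Ioo fun x hx => ?_)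
  have hyx : |y x| ≤ M := hM x (Ioo_subset_Icc_self hx)
  have hx' : |x| ≤ max |a| |b| := abs_le_max_abs_abs hx.1.le hx.2.le
  have hderiv : |deriv y x| ≤ K := norm_deriv_le_of_lipschitzOn (Icc_mem_nhds hx.1 hx.2) hy
  have hcube : |y x ^ 3 - x| ≤ M ^ 3 + max |a| |b| :=
    (abs_sub _ _).trans (add_le_add (by rw [abs_pow]; gcongr) hx')
  rw [maniaIntegrand, Real.norm_eq_abs, abs_mul, abs_pow, abs_pow]
  gcongr

lemma integral_maniaIntegrand_of_chord {y : ℝ → ℝ} {a b h : ℝ} (hh : 0 < h)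
    (hy : EqOn y (fun x => a * x + b) (Icc 0 h)) (hy0 : y 0 = 0) (hyh : y h = h ^ (1/3 : ℝ)) :
    ∫ x in (0:ℝ)..h, maniaIntegrand y x = 8 / (105 * h) := by
  have hb : b = 0 := by simpa using (hy ⟨le_rfl, hh.le⟩).symm.trans hy0
  have ha : a ^ 3 = (h ^ 2)⁻¹ := by
    have hah : a * h = h ^ (1/3 : ℝ) := by
      simpa [hb] using (hy ⟨hh.le, le_rfl⟩).symm.trans hyh
    have hah3 : (a * h) ^ 3 = h := by rw [hah, rpow_one_third_pow_three hh.le]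
    field_simp
    apply mul_left_cancel₀ hh.ne'
    linear_combination hah3
  have hpoly : ∀ x ∈ Ioo 0 h, maniaIntegrand y x =
      (a ^ 3) ^ 2 * ((a ^ 3) ^ 2 * x ^ 6 - 2 * a ^ 3 * x ^ 4 + x ^ 2) := fun x hx => by
    rw [maniaIntegrand, deriv_eq_of_eqOn_affine hy hx, hy (Ioo_subset_Icc_self hx), hb]
    ring
  rw [intervalIntegral.integral_of_le hh.le, integral_Ioc_eq_integral_Ioo,
    setIntegral_congr_fun measurableSet_Ioo hpoly, ← integral_Ioc_eq_integral_Ioo,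
    ← intervalIntegral.integral_of_le hh.le, intervalIntegral.integral_const_mul,
    intervalIntegral.integral_add, intervalIntegral.integral_sub,
    intervalIntegral.integral_const_mul, intervalIntegral.integral_const_mul]
  · simp only [integral_pow, ha]
    field_simp
    ring
  all_goals exact Continuous.intervalIntegrable (by fun_prop) _ _

lemma exists_mem_Icc_nodes {n : ℕ} (hn : 1 ≤ n) {x : ℝ} (hx : x ∈ Icc (0:ℝ) 1) :
    ∃ k < n, x ∈ Icc ((k : ℝ) / n) ((k + 1) / n) := by
  have hn0 : (0 : ℝ) < n := by exact_mod_cast hn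
  have hnx : 0 ≤ (n : ℝ) * x := mul_nonneg hn0.le hx.1
  refine ⟨min ⌊(n : ℝ) * x⌋₊ (n - 1), by omega, ?_, ?_⟩
  · rw [div_le_iff₀ hn0, mul_comm x]
    calc ((min ⌊(n : ℝ) * x⌋₊ (n - 1) : ℕ) : ℝ) ≤ ⌊(n : ℝ) * x⌋₊ := by
          exact_mod_cast min_le_left _ _
      _ ≤ n * x := Nat.floor_le hnx
  · rw [le_div_iff₀ hn0, mul_comm x]
    rcases le_total ⌊(n : ℝ) * x⌋₊ (n - 1) with h | h
    · rw [min_eq_left h]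
      exact (Nat.lt_floor_add_one _).le
    · rw [min_eq_right h, Nat.cast_sub hn, Nat.cast_one, sub_add_cancel]
      nlinarith [hx.2]

def IsPiecewiseAffineInterpolant (g : ℝ → ℝ) (n : ℕ) (q : ℝ → ℝ) : Prop :=
  (∀ i ≤ n, q (i / n) = g (i / n)) ∧
    ∀ i : ℕ, 1 ≤ i → i ≤ n →
      ∃ a b : ℝ, EqOn q (fun x => a * x + b) (Icc ((i - 1) / n) (i / n))

namespace IsPiecewiseAffineInterpolant

variable {g q : ℝ → ℝ} {n k : ℕ}

lemma eqOn_segment (hq : IsPiecewiseAffineInterpolant g n q) (hk : k < n) :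
    ∃ b, EqOn q (fun x => slope g (k / n) ((k + 1) / n) * x + b)
      (Icc (k / n) ((k + 1) / n)) := by
  have hn0 : (0 : ℝ) < n := by exact_mod_cast (k.zero_le.trans_lt hk)
  obtain ⟨a, b, hab⟩ := hq.2 (k + 1) (by omega) hk
  push_cast at hab
  rw [add_sub_cancel_right] at hab
  have hlr : (k : ℝ) / n < (k + 1) / n := by gcongr; linarith
  have hslope : slope g (k / n) ((k + 1) / n) = a := by
    have h₀ := hq.1 k hk.le
    have h₁ := hq.1 (k + 1) hk
    push_cast at h₁
    rw [← slope_eq_of_eqOn_affine hlr hab, slope_def_field, slope_def_field, h₀, h₁]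
  exact ⟨b, hslope ▸ hab⟩

lemma apply_zero (hq : IsPiecewiseAffineInterpolant g n q) : q 0 = g 0 := by
  simpa using hq.1 0 n.zero_le

lemma apply_one (hq : IsPiecewiseAffineInterpolant g n q) (hn : 1 ≤ n) : q 1 = g 1 := by
  have hn0 : (n : ℝ) ≠ 0 := by positivity
  simpa [div_self hn0] using hq.1 n le_rfl

lemma lipschitzOnWith_Icc_node (hq : IsPiecewiseAffineInterpolant (fun x => x ^ (1/3 : ℝ)) n q)
    (hk : k ≤ n) : LipschitzOnWith n q (Icc 0 (k / n)) := by
  induction k with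
  | zero => simpa using (LipschitzOnWith.of_dist_le_mul fun x hx y hy => by simp_all)
  | succ k ih =>
    obtain ⟨b, hb⟩ := hq.eqOn_segment hk
    have hslope := slope_rpow_one_third_segment_mem hk
    push_cast
    refine (ih (by omega)).Icc_union (lipschitzOnWith_of_eqOn_affine ?_ hb)
    rw [abs_of_nonneg hslope.1]
    exact_mod_cast hslope.2

lemma lipschitzOnWith (hq : IsPiecewiseAffineInterpolant (fun x => x ^ (1/3 : ℝ)) n q)
    (hn : 1 ≤ n) : LipschitzOnWith n q (Icc 0 1) := by
  have hn0 : (n : ℝ) ≠ 0 := by positivity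
  simpa [div_self hn0] using hq.lipschitzOnWith_Icc_node le_rfl

lemma abs_sub_rpow_one_third_le (hq : IsPiecewiseAffineInterpolant (fun x => x ^ (1/3 : ℝ)) n q)
    (hn : 1 ≤ n) {x : ℝ} (hx : x ∈ Icc (0 : ℝ) 1) :
    |q x - x ^ (1/3 : ℝ)| ≤ ((n : ℝ)⁻¹) ^ (1/3 : ℝ) := by
  obtain ⟨k, hk, hxk⟩ := exists_mem_Icc_nodes hn hx
  obtain ⟨b, hb⟩ := hq.eqOn_segment hk
  have hl : (0 : ℝ) ≤ k / n := by positivity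
  have hlr : (k : ℝ) / n ≤ (k + 1) / n := hxk.1.trans hxk.2
  have hq_mem := mem_Icc_of_eqOn_affine (slope_rpow_one_third_segment_mem hk).1 hb hxk
  rw [show q (k / n) = (k / n : ℝ) ^ (1/3 : ℝ) by exact_mod_cast hq.1 k hk.le,
    show q ((k + 1) / n) = ((k + 1) / n : ℝ) ^ (1/3 : ℝ) by exact_mod_cast hq.1 (k + 1) hk]
    at hq_mem
  have hx_mem :
      x ^ (1/3 : ℝ) ∈ Icc ((k / n : ℝ) ^ (1/3 : ℝ)) (((k + 1) / n : ℝ) ^ (1/3 : ℝ)) :=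
    ⟨Real.rpow_le_rpow hl hxk.1 (by norm_num),
      Real.rpow_le_rpow (hl.trans hxk.1) hxk.2 (by norm_num)⟩
  have hgap := rpow_one_third_sub_le hl hlr
  rw [show ((k : ℝ) + 1) / n - k / n = (n : ℝ)⁻¹ by field_simp; ring] at hgap
  rw [abs_le]
  constructor <;> linarith [hq_mem.1, hq_mem.2, hx_mem.1, hx_mem.2]

lemma le_maniaFunctional (hq : IsPiecewiseAffineInterpolant (fun x => x ^ (1/3 : ℝ)) n q)
    (hn : 1 ≤ n) : 8 * n / 105 ≤ maniaFunctional q := by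
  have hn0 : (0 : ℝ) < n := by exact_mod_cast hn
  obtain ⟨b, hb⟩ := hq.eqOn_segment (k := 0) hn
  simp only [CharP.cast_eq_zero, zero_div, zero_add] at hb
  have hfirst := integral_maniaIntegrand_of_chord (by positivity) hb
    (by simpa using hq.apply_zero) (by simpa using hq.1 1 hn)
  calc 8 * (n : ℝ) / 105 = 8 / (105 * (1 / n)) := by field_simp
    _ = ∫ x in (0:ℝ)..1 / n, maniaIntegrand q x := hfirst.symm
    _ ≤ ∫ x in (0:ℝ)..1, maniaIntegrand q x :=
        intervalIntegral.integral_mono_interval le_rfl (by positivity)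
          (div_le_one_of_le₀ (by exact_mod_cast hn) hn0.le)
          (ae_of_all _ (maniaIntegrand_nonneg q))
          (intervalIntegrable_maniaIntegrand zero_le_one (hq.lipschitzOnWith hn))
    _ = maniaFunctional q := rfl

end IsPiecewiseAffineInterpolant

/-- For `n ≥ 1`, let `p n` be the piecewise linear function with nodes `x_i = i/n`
interpolating `ŷ(x) = x^(1/3)`: `p n (i/n) = (i/n)^(1/3)` for `i = 0, …, n`, and `p n`
is affine on each subinterval `[(i-1)/n, i/n]`. Then each `p n` is Lipschitz on `[0,1]`
with `p n 0 = 0` and `p n 1 = 1`, `p n` converges to `ŷ` almost everywhere on `[0,1]`,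
and `I[p n] → ∞` as `n → ∞`. -/
theorem mania_piecewise_linear_interpolants
    (p : ℕ → ℝ → ℝ)
    (hnodes : ∀ n : ℕ, 1 ≤ n → ∀ i ≤ n,
      p n ((i : ℝ) / (n : ℝ)) = ((i : ℝ) / (n : ℝ)) ^ (1/3 : ℝ))
    (haffine : ∀ n : ℕ, 1 ≤ n → ∀ i : ℕ, 1 ≤ i → i ≤ n → ∃ a b : ℝ,
      ∀ x ∈ Set.Icc (((i : ℝ) - 1) / (n : ℝ)) ((i : ℝ) / (n : ℝ)), p n x = a * x + b) :
    (∀ n, 1 ≤ n →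
      (∃ K : NNReal, LipschitzOnWith K (p n) (Set.Icc (0:ℝ) 1)) ∧
      p n 0 = 0 ∧ p n 1 = 1) ∧
    (∀ᵐ x ∂(volume.restrict (Set.Icc (0:ℝ) 1)),
      Tendsto (fun n => p n x) atTop (nhds (x ^ (1/3 : ℝ)))) ∧
    Tendsto (fun n => maniaFunctional (p n)) atTop atTop := by
  have hq : ∀ n, 1 ≤ n → IsPiecewiseAffineInterpolant (fun x => x ^ (1/3 : ℝ)) n (p n) :=
    fun n hn => ⟨hnodes n hn, haffine n hn⟩
  refine ⟨fun n hn => ⟨⟨n, (hq n hn).lipschitzOnWith hn⟩, ?_, ?_⟩, ?_, ?_⟩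
  · simpa using (hq n hn).apply_zero
  · simpa using (hq n hn).apply_one hn
  · refine ae_restrict_of_forall_mem measurableSet_Icc fun x hx => ?_
    have hmesh : Tendsto (fun n : ℕ => ((n : ℝ)⁻¹) ^ (1/3 : ℝ)) atTop (nhds 0) := by
      simpa using (tendsto_inv_atTop_zero.comp tendsto_natCast_atTop_atTop).rpow_const
        (Or.inr (by norm_num : (0 : ℝ) ≤ 1/3))
    refine tendsto_iff_norm_sub_tendsto_zero.2
      (squeeze_zero' (Eventually.of_forall fun n => norm_nonneg _) ?_ hmesh)
    filter_upwards [eventually_ge_atTop 1] with n hn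
    exact (hq n hn).abs_sub_rpow_one_third_le hn hx
  · refine tendsto_atTop_mono' atTop ?_
      ((tendsto_natCast_atTop_atTop.const_mul_atTop (by norm_num : (0 : ℝ) < 8)).atTop_div_const
        (by norm_num : (0 : ℝ) < 105))
    filter_upwards [eventually_ge_atTop 1] with n hn
    exact (hq n hn).le_maniaFunctional hn
end
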